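/- arXiv:1607.01387 — 4 statements merged into one kernel-verified Lean document; each statement's English description precedes it below -/
import Mathlib

section
/- Let Σ ⊆ F₂^{2n} be an isotropic subspace (a stabilizer module) and for a subset M of the n qubits let ℓ_M denote the dimension over F₂ of (Σ^⊥ ∩ V_M)/(Σ ∩ V_M), where V_M ⊆ F₂^{2n} is the subspace of vectors supported on M. Then ℓ_M + ℓ_{M^c} = 2(n − dim Σ), i.e., ℓ_M + ℓ_{M^c} = 2k where k is the number of logical qubits. -/
/-!
Since `V_M^⊥ = V_{M^c}` and the symplectic form is nondegenerate,
`Σ^⊥ ∩ V_M = (Σ + V_{M^c})^⊥` has dimension `2n - dim Σ - dim V_{M^c} + dim (Σ ∩ V_{M^c})`.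
As `ℓ_M = dim (Σ^⊥ ∩ V_M) - dim (Σ ∩ V_M)` by isotropy, adding the same identity for `M^c`
makes the terms `dim (Σ ∩ V_M)`, `dim (Σ ∩ V_{M^c})` cancel, and `dim V_M + dim V_{M^c} = 2n`
leaves `ℓ_M + ℓ_{M^c} = 4n - 2 dim Σ - 2n`.
-/

open Matrix

/-- The subspace of vectors of `F₂^{2n}` supported on the set `M` of qubits. -/
noncomputable def coordSubspace {n : ℕ} (M : Finset (Fin n)) :
    Submodule (ZMod 2) (Fin n ⊕ Fin n → ZMod 2) :=
  ⨅ i ∈ Mᶜ, (LinearMap.ker (LinearMap.proj (R := ZMod 2) (φ := fun _ : Fin n ⊕ Fin n => ZMod 2) (Sum.inl i)) ⊓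
    LinearMap.ker (LinearMap.proj (R := ZMod 2) (φ := fun _ : Fin n ⊕ Fin n => ZMod 2) (Sum.inr i)))

/-- The standard symplectic form on `F₂^{2n}` (over `F₂`, `−1 = 1`). -/
noncomputable def stdSymplecticForm (n : ℕ) :
    LinearMap.BilinForm (ZMod 2) (Fin n ⊕ Fin n → ZMod 2) :=
  Matrix.toLinearMap₂' (ZMod 2) (Matrix.fromBlocks 0 1 1 0)

/-- `ℓ_M` : the number of independent logical operators supported on `M`, i.e. the
dimension of `(Σ^⊥ ∩ V_M)/(Σ ∩ V_M)`. -/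
noncomputable def numLogical {n : ℕ} (Sig : Submodule (ZMod 2) (Fin n ⊕ Fin n → ZMod 2))
    (M : Finset (Fin n)) : ℕ :=
  Module.finrank (ZMod 2)
    (↥((stdSymplecticForm n).orthogonal Sig ⊓ coordSubspace M) ⧸
      Submodule.comap ((stdSymplecticForm n).orthogonal Sig ⊓ coordSubspace M).subtype
        (Sig ⊓ coordSubspace M))

open Module

theorem Submodule.finrank_quotient_comap_subtype_add_finrank {K V : Type*} [DivisionRing K]
    [AddCommGroup V] [Module K V] [FiniteDimensional K V] {p q : Submodule K V} (h : p ≤ q) :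
    finrank K (q ⧸ p.comap q.subtype) + finrank K p = finrank K q := by
  rw [← (Submodule.comapSubtypeEquivOfLe h).finrank_eq]
  exact Submodule.finrank_quotient_add_finrank _

namespace LinearMap.BilinForm

theorem orthogonal_sup {R M : Type*} [CommRing R] [AddCommGroup M] [Module R M]
    (B : LinearMap.BilinForm R M) (p q : Submodule R M) :
    B.orthogonal (p ⊔ q) = B.orthogonal p ⊓ B.orthogonal q :=
  le_antisymm (le_inf (orthogonal_le le_sup_left) (orthogonal_le le_sup_right))
    fun x ⟨hp, hq⟩ y hy => by
      obtain ⟨a, ha, b, hb, rfl⟩ := Submodule.mem_sup.1 hy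
      rw [map_add, LinearMap.add_apply, hp a ha, hq b hb, add_zero]

variable {K V : Type*} [Field K] [AddCommGroup V] [Module K V] [FiniteDimensional K V]
  {B : LinearMap.BilinForm K V}

theorem finrank_add_finrank_orthogonal_of_nondegenerate (hB : B.Nondegenerate)
    (W : Submodule K V) : finrank K W + finrank K (B.orthogonal W) = finrank K V := by
  rw [finrank_add_finrank_orthogonal', hB.ker_eq_bot, inf_bot_eq, finrank_bot, add_zero]

theorem finrank_orthogonal_inf_add_finrank_orthogonal_inf_orthogonal (hB : B.Nondegenerate)
    (hB' : B.IsRefl) (S U : Submodule K V) :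
    finrank K ↥(B.orthogonal S ⊓ U) + finrank K ↥(B.orthogonal S ⊓ B.orthogonal U) +
        2 * finrank K S =
      finrank K V + finrank K ↥(S ⊓ U) + finrank K ↥(S ⊓ B.orthogonal U) := by
  have hU := finrank_add_finrank_orthogonal_of_nondegenerate hB U
  have hSW := finrank_add_finrank_orthogonal_of_nondegenerate hB (S ⊔ B.orthogonal U)
  have hSU := finrank_add_finrank_orthogonal_of_nondegenerate hB (S ⊔ U)
  rw [orthogonal_sup, orthogonal_orthogonal hB hB'] at hSW
  rw [orthogonal_sup] at hSU
  have := Submodule.finrank_sup_add_finrank_inf_eq S U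
  have := Submodule.finrank_sup_add_finrank_inf_eq S (B.orthogonal U)
  omega

end LinearMap.BilinForm

section StdSymplectic

variable {n : ℕ}

theorem stdSymplecticForm_apply (x y : Fin n ⊕ Fin n → ZMod 2) :
    stdSymplecticForm n x y = ∑ j, x j * y j.swap := by
  rw [stdSymplecticForm, Matrix.toLinearMap₂'_apply']
  simp [mulVec, dotProduct, Fintype.sum_sum_type, one_apply]

theorem stdSymplecticForm_single (j : Fin n ⊕ Fin n) (x : Fin n ⊕ Fin n → ZMod 2) :
    stdSymplecticForm n (Pi.single j 1) x = x j.swap := by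
  simp [stdSymplecticForm_apply, Pi.single_apply]

theorem stdSymplecticForm_comm (x y : Fin n ⊕ Fin n → ZMod 2) :
    stdSymplecticForm n x y = stdSymplecticForm n y x := by
  simp only [stdSymplecticForm_apply]
  exact Fintype.sum_equiv (Equiv.sumComm _ _) _ _ fun j => by cases j <;> simp [mul_comm]

theorem stdSymplecticForm_isRefl : (stdSymplecticForm n).IsRefl := fun x y h => by
  rwa [stdSymplecticForm_comm]

theorem stdSymplecticForm_nondegenerate : (stdSymplecticForm n).Nondegenerate := by
  have hsep : (stdSymplecticForm n).SeparatingRight := fun x hx => funext fun j => by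
    simpa [stdSymplecticForm_single] using hx (Pi.single j.swap 1)
  exact ⟨fun x hx => hsep x fun y => by rw [stdSymplecticForm_comm]; exact hx y, hsep⟩

theorem mem_coordSubspace {M : Finset (Fin n)} {x : Fin n ⊕ Fin n → ZMod 2} :
    x ∈ coordSubspace M ↔ ∀ i ∉ M, x (Sum.inl i) = 0 ∧ x (Sum.inr i) = 0 := by
  simp [coordSubspace, Submodule.mem_iInf]

theorem single_mem_coordSubspace {M : Finset (Fin n)} {j : Fin n ⊕ Fin n}
    (hj : j.elim id id ∈ M) : Pi.single j 1 ∈ coordSubspace M := by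
  rw [mem_coordSubspace]
  intro i hi
  rcases j with k | k <;> simp only [Sum.elim_inl, Sum.elim_inr, id] at hj <;> simp [ne_of_mem_of_not_mem hj hi]

theorem orthogonal_coordSubspace (M : Finset (Fin n)) :
    (stdSymplecticForm n).orthogonal (coordSubspace M) = coordSubspace Mᶜ := by
  ext x
  rw [LinearMap.BilinForm.mem_orthogonal_iff, mem_coordSubspace]
  constructor
  · intro hx i hi
    rw [Finset.mem_compl, not_not] at hi
    constructor
    · simpa [stdSymplecticForm_single] using hx _ (single_mem_coordSubspace (j := .inr i) hi)
    · simpa [stdSymplecticForm_single] using hx _ (single_mem_coordSubspace (j := .inl i) hi)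
  · intro hx y hy
    rw [mem_coordSubspace] at hy
    rw [stdSymplecticForm_apply]
    refine Finset.sum_eq_zero fun j _ => ?_
    rcases j with i | i <;> by_cases hi : i ∈ M <;> simp_all

end StdSymplectic

theorem numLogical_add_finrank_inf {n : ℕ} {Sig : Submodule (ZMod 2) (Fin n ⊕ Fin n → ZMod 2)}
    (hSig : Sig ≤ (stdSymplecticForm n).orthogonal Sig) (M : Finset (Fin n)) :
    numLogical Sig M + finrank (ZMod 2) ↥(Sig ⊓ coordSubspace M) =
      finrank (ZMod 2) ↥((stdSymplecticForm n).orthogonal Sig ⊓ coordSubspace M) :=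
  Submodule.finrank_quotient_comap_subtype_add_finrank (inf_le_inf_right _ hSig)

/-- Logical operator counting: `ℓ_M + ℓ_{M^c} = 2k` where `k = n − dim Σ`. -/
theorem logical_operator_counting {n : ℕ}
    (Sig : Submodule (ZMod 2) (Fin n ⊕ Fin n → ZMod 2))
    (hiso : ∀ x ∈ Sig, ∀ y ∈ Sig, stdSymplecticForm n x y = 0)
    (M : Finset (Fin n)) :
    numLogical Sig M + numLogical Sig Mᶜ =
      2 * (n - Module.finrank (ZMod 2) Sig) := by
  have hSig : Sig ≤ (stdSymplecticForm n).orthogonal Sig := fun x hx y hy => hiso y hy x hx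
  have hdim : finrank (ZMod 2) (Fin n ⊕ Fin n → ZMod 2) = 2 * n := by
    simp [two_mul]
  have key := LinearMap.BilinForm.finrank_orthogonal_inf_add_finrank_orthogonal_inf_orthogonal
    stdSymplecticForm_nondegenerate stdSymplecticForm_isRefl Sig (coordSubspace M)
  rw [orthogonal_coordSubspace, hdim] at key
  have hM := numLogical_add_finrank_inf hSig M
  have hMc := numLogical_add_finrank_inf hSig Mᶜ
  omega
end

section
/- Let R be an integral domain and let σ, τ be matrices over R with 2q rows such that the column spans satisfy im σ = im τ as submodules of R^{2q}. Then the torsion submodules of the cokernels of the transposed (conjugate) maps are isomorphic as R-modules: T(coker σᵀ) ≅ T(coker τᵀ). -/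
/-!
Since every column of `τ` lies in the column span of `σ`, we have `τ = σ A` for some matrix `A`,
so `τᵀ = Aᵀ σᵀ` factors through `σᵀ`; symmetrically `σᵀ` factors through `τᵀ`.
If `g = ℓ ∘ f`, the shear `(m, n) ↦ (m, n - ℓ m)` identifies `coker (f, g)` with `coker f × N`,
and when `N` is torsion-free this has the same torsion as `coker f`. Applied to `(σᵀ, τᵀ)` and
to `(τᵀ, σᵀ)`, both torsion submodules are identified with that of `coker (σᵀ, τᵀ)`.
-/

open Matrix

namespace LinearEquiv

variable {R M N : Type*} [CommRing R] [AddCommGroup M] [Module R M] [AddCommGroup N] [Module R N]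

theorem map_torsion (e : M ≃ₗ[R] N) :
    (Submodule.torsion R M).map (e : M →ₗ[R] N) = Submodule.torsion R N := by
  ext x
  simp only [Submodule.mem_map_equiv, Submodule.mem_torsion_iff]
  refine exists_congr fun a => ?_
  rw [Submonoid.smul_def, Submonoid.smul_def, ← map_smul, LinearEquiv.map_eq_zero_iff]

def torsionCongr (e : M ≃ₗ[R] N) : Submodule.torsion R M ≃ₗ[R] Submodule.torsion R N :=
  e.ofSubmodules _ _ e.map_torsion

end LinearEquiv

namespace Submodule

variable {R M N : Type*} [CommRing R] [AddCommGroup M] [Module R M] [AddCommGroup N] [Module R N]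

theorem torsion_prod_eq_map_inl [Module.IsTorsionFree R N] :
    torsion R (M × N) = (torsion R M).map (LinearMap.inl R M N) := by
  ext ⟨m, n⟩
  simp only [mem_torsion_iff, mem_map, LinearMap.inl_apply, Prod.ext_iff, Prod.smul_fst,
    Prod.smul_snd, Prod.fst_zero, Prod.snd_zero, Submonoid.smul_def]
  constructor
  · rintro ⟨a, hm, hn⟩
    have hn₀ : n = 0 := (isRegular_iff_mem_nonZeroDivisors.mpr a.2).smul_eq_zero_iff_right.mp hn
    exact ⟨m, ⟨a, hm⟩, rfl, hn₀.symm⟩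
  · rintro ⟨_, ⟨a, ha⟩, rfl, rfl⟩
    exact ⟨a, ha, smul_zero _⟩

noncomputable def torsionProdEquiv [Module.IsTorsionFree R N] :
    torsion R (M × N) ≃ₗ[R] torsion R M :=
  (LinearEquiv.ofEq _ _ torsion_prod_eq_map_inl).trans
    (equivMapOfInjective _ LinearMap.inl_injective _).symm

end Submodule

namespace LinearMap

variable {R M N P : Type*} [CommRing R] [AddCommGroup M] [Module R M] [AddCommGroup N] [Module R N]
  [AddCommGroup P] [Module R P]

noncomputable def quotientRangeProdEquiv (f : P →ₗ[R] M) {g : P →ₗ[R] N} {ℓ : M →ₗ[R] N}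
    (h : ℓ ∘ₗ f = g) : ((M × N) ⧸ range (f.prod g)) ≃ₗ[R] (M ⧸ range f) × N := by
  let φ : M × N →ₗ[R] (M ⧸ range f) × N :=
    ((range f).mkQ ∘ₗ fst R M N).prod (snd R M N - ℓ ∘ₗ fst R M N)
  have hker : ker φ = range (f.prod g) := by
    ext ⟨m, n⟩
    simp only [φ, ker_prod, Submodule.mem_inf, mem_ker, coe_comp, coe_fst, Function.comp_apply,
      Submodule.mkQ_apply, Submodule.Quotient.mk_eq_zero, mem_range, sub_apply, snd_apply,
      prod_apply, Function.prod_apply, Prod.mk.injEq]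
    subst h
    constructor
    · rintro ⟨⟨p, rfl⟩, hn⟩
      exact ⟨p, rfl, (sub_eq_zero.mp hn).symm⟩
    · rintro ⟨p, rfl, rfl⟩
      exact ⟨⟨p, rfl⟩, sub_self _⟩
  have hsurj : Function.Surjective φ := by
    rintro ⟨x, n⟩
    obtain ⟨m, rfl⟩ := Submodule.mkQ_surjective _ x
    exact ⟨(m, n + ℓ m), by simp [φ]⟩
  exact (Submodule.quotEquivOfEq _ _ hker.symm).trans (φ.quotKerEquivOfSurjective hsurj)

noncomputable def quotientRangeProdComm (f : P →ₗ[R] M) (g : P →ₗ[R] N) :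
    ((M × N) ⧸ range (f.prod g)) ≃ₗ[R] ((N × M) ⧸ range (g.prod f)) :=
  Submodule.Quotient.equiv _ _ (LinearEquiv.prodComm R M N) (by rw [← range_comp]; rfl)

noncomputable def torsionQuotientRangeProdEquiv [Module.IsTorsionFree R N] (f : P →ₗ[R] M)
    {g : P →ₗ[R] N} {ℓ : M →ₗ[R] N} (h : ℓ ∘ₗ f = g) :
    Submodule.torsion R ((M × N) ⧸ range (f.prod g)) ≃ₗ[R] Submodule.torsion R (M ⧸ range f) :=
  (quotientRangeProdEquiv f h).torsionCongr.trans Submodule.torsionProdEquiv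

end LinearMap

namespace Matrix

variable {R m n p : Type*} [CommSemiring R] [Fintype n] [Fintype p]

theorem exists_mul_eq_of_range_mulVecLin_le [DecidableEq p] (σ : Matrix m n R) (τ : Matrix m p R)
    (hle : LinearMap.range τ.mulVecLin ≤ LinearMap.range σ.mulVecLin) :
    ∃ A : Matrix n p R, σ * A = τ := by
  have hcol : ∀ j, ∃ x, σ *ᵥ x = τ.col j := fun j =>
    hle ⟨Pi.single j 1, mulVec_single_one τ j⟩
  choose x hx using hcol
  exact ⟨(Matrix.of x)ᵀ, ext_col fun j => by rw [← hx j]; rfl⟩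

theorem exists_comp_transpose_mulVecLin_eq [Fintype m] [DecidableEq p]
    (σ : Matrix m n R) (τ : Matrix m p R)
    (hle : LinearMap.range τ.mulVecLin ≤ LinearMap.range σ.mulVecLin) :
    ∃ ℓ : (n → R) →ₗ[R] (p → R), ℓ ∘ₗ σᵀ.mulVecLin = τᵀ.mulVecLin := by
  obtain ⟨A, hA⟩ := σ.exists_mul_eq_of_range_mulVecLin_le τ hle
  exact ⟨Aᵀ.mulVecLin, by rw [← mulVecLin_mul, ← transpose_mul, hA]⟩

end Matrix

theorem torsion_coker_transpose_iso_general {R : Type*} [CommRing R]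
    (q t₁ t₂ : ℕ)
    (σ : Matrix (Fin (2 * q)) (Fin t₁) R) (τ : Matrix (Fin (2 * q)) (Fin t₂) R)
    (him : LinearMap.range σ.mulVecLin = LinearMap.range τ.mulVecLin) :
    Nonempty
      ((Submodule.torsion R ((Fin t₁ → R) ⧸ LinearMap.range σ.transpose.mulVecLin)) ≃ₗ[R]
       (Submodule.torsion R ((Fin t₂ → R) ⧸ LinearMap.range τ.transpose.mulVecLin))) := by
  obtain ⟨ℓ₁, h₁⟩ := σ.exists_comp_transpose_mulVecLin_eq τ him.ge
  obtain ⟨ℓ₂, h₂⟩ := τ.exists_comp_transpose_mulVecLin_eq σ him.le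
  exact ⟨(LinearMap.torsionQuotientRangeProdEquiv _ h₁).symm ≪≫ₗ
    (LinearMap.quotientRangeProdComm σᵀ.mulVecLin τᵀ.mulVecLin).torsionCongr ≪≫ₗ
    LinearMap.torsionQuotientRangeProdEquiv _ h₂⟩

/-- If two matrices `σ`, `τ` over a domain `R` with `2q` rows have the same column span
in `R^{2q}`, then the torsion submodules of the cokernels of their transposes are
isomorphic as `R`-modules. -/
theorem torsion_coker_transpose_iso {R : Type*} [CommRing R] [IsDomain R]
    (q t₁ t₂ : ℕ)
    (σ : Matrix (Fin (2 * q)) (Fin t₁) R) (τ : Matrix (Fin (2 * q)) (Fin t₂) R)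
    (him : LinearMap.range σ.mulVecLin = LinearMap.range τ.mulVecLin) :
    Nonempty
      ((Submodule.torsion R ((Fin t₁ → R) ⧸ LinearMap.range σ.transpose.mulVecLin)) ≃ₗ[R]
       (Submodule.torsion R ((Fin t₂ → R) ⧸ LinearMap.range τ.transpose.mulVecLin))) :=
  torsion_coker_transpose_iso_general q t₁ t₂ σ τ him
end

section
/- Over R = F₂[x^{±1}, y^{±1}], the toric code chain complex R ←∂₁ R² ←∂₂ R, with ∂₁ = (x−1, y−1) and ∂₂ = (y−1, −x+1)ᵀ, satisfies ∂₁∂₂ = 0 and is exact at the middle: ker ∂₁ = im ∂₂. -/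
/-- The Laurent polynomial ring `F₂[x^{±1}, y^{±1}]` as the group algebra of `ℤ × ℤ`. -/
abbrev LaurentF2 : Type := AddMonoidAlgebra (ZMod 2) (ℤ × ℤ)

noncomputable def Lx : LaurentF2 := AddMonoidAlgebra.single (1, 0) 1
noncomputable def Ly : LaurentF2 := AddMonoidAlgebra.single (0, 1) 1

/-- `∂₁ = (x−1, y−1) : R² → R`. -/
noncomputable def toricD1 : (Fin 2 → LaurentF2) →ₗ[LaurentF2] (Fin 1 → LaurentF2) :=
  Matrix.mulVecLin !![Lx - 1, Ly - 1]

/-- `∂₂ = (y−1, −x+1)ᵀ : R → R²`. -/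
noncomputable def toricD2 : (Fin 1 → LaurentF2) →ₗ[LaurentF2] (Fin 2 → LaurentF2) :=
  Matrix.mulVecLin !![Ly - 1; -Lx + 1]

/-!
Specialising `x ↦ 1` is a ring endomorphism `ε` of `R` that kills `x - 1` and fixes `y - 1`,
and `f - ε f` is divisible by `x - 1` for every `f`. Given `(x - 1) u + (y - 1) v = 0`, applying `ε`
gives `(y - 1) ε v = 0`, so `ε v = 0` in the domain `R` and `v = (x - 1) c`; cancelling `x - 1`
then gives `u = -(y - 1) c`, i.e. `(u, v) = ∂₂ (-c)`.
-/

section Koszul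

open Matrix

variable {R : Type*} [CommRing R]

theorem mulVecLin_row_comp_mulVecLin_col (a b : R) :
    mulVecLin !![a, b] ∘ₗ mulVecLin !![b; -a] = 0 := by
  have : !![a, b] * !![b; -a] = 0 := by
    ext i j
    fin_cases i; fin_cases j
    simp [mul_apply, Fin.sum_univ_two, mul_comm]
  rw [← mulVecLin_mul, this, mulVecLin_zero]

theorem ker_mulVecLin_row_eq_range_mulVecLin_col {a b : R}
    (hsyz : ∀ u v : R, a * u + b * v = 0 → ∃ c, u = b * c ∧ v = -(a * c)) :
    LinearMap.ker (mulVecLin !![a, b]) = LinearMap.range (mulVecLin !![b; -a]) := by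
  refine le_antisymm (fun u hu => ?_)
    (LinearMap.range_le_ker_iff.mpr (mulVecLin_row_comp_mulVecLin_col a b))
  have hrel : a * u 0 + b * u 1 = 0 := by
    simpa [mulVec, dotProduct, Fin.sum_univ_two] using congrFun hu 0
  obtain ⟨c, hu₀, hu₁⟩ := hsyz _ _ hrel
  refine ⟨fun _ => c, funext fun i => ?_⟩
  fin_cases i <;> simp [mulVec, dotProduct, hu₀, hu₁]

theorem exists_eq_mul_of_mul_add_mul_eq_zero [IsDomain R] (ε : R →+* R) {a b : R} (ha : a ≠ 0)
    (hεa : ε a = 0) (hεb : ε b ≠ 0) (hdvd : ∀ f, a ∣ f - ε f) {u v : R}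
    (h : a * u + b * v = 0) : ∃ c, u = b * c ∧ v = -(a * c) := by
  have hεv : ε v = 0 := by
    have := congrArg ε h
    rw [map_add, map_mul, map_mul, hεa, zero_mul, zero_add, map_zero] at this
    exact (mul_eq_zero.mp this).resolve_left hεb
  obtain ⟨c, hc⟩ := hdvd v
  rw [hεv, sub_zero] at hc
  refine ⟨-c, mul_left_cancel₀ ha ?_, by rw [hc]; ring⟩
  linear_combination h - b * hc

end Koszul

namespace AddMonoidAlgebra

variable {k : Type*} [CommRing k]

noncomputable def specializeXOne : AddMonoidAlgebra k (ℤ × ℤ) →+* AddMonoidAlgebra k (ℤ × ℤ) :=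
  mapDomainRingHom k ((AddMonoidHom.inr ℤ ℤ).comp (AddMonoidHom.snd ℤ ℤ))

theorem specializeXOne_single (a : ℤ × ℤ) (r : k) :
    specializeXOne (single a r) = single (0, a.2) r := by
  simp [specializeXOne, mapDomainRingHom]

theorem single_fst_sub_one_dvd (m : ℤ) :
    single ((1, 0) : ℤ × ℤ) (1 : k) - 1 ∣ single ((m, 0) : ℤ × ℤ) 1 - 1 := by
  induction m using Int.induction_on with
  | zero => simp [one_def, Prod.mk_zero_zero]
  | succ m ih =>
    have : single ((m + 1, 0) : ℤ × ℤ) (1 : k) - 1 =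
        single ((m, 0) : ℤ × ℤ) 1 * (single (1, 0) 1 - 1) + (single ((m, 0) : ℤ × ℤ) 1 - 1) := by
      rw [mul_sub, single_mul_single]; norm_num
    exact this ▸ dvd_add (dvd_mul_left _ _) ih
  | pred m ih =>
    have : single ((-m - 1, 0) : ℤ × ℤ) (1 : k) - 1 =
        -single ((-m - 1, 0) : ℤ × ℤ) 1 * (single (1, 0) 1 - 1) +
          (single ((-m, 0) : ℤ × ℤ) 1 - 1) := by
      rw [neg_mul, mul_sub, single_mul_single]; norm_num
    exact this ▸ dvd_add (dvd_mul_left _ _) ih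

theorem single_fst_sub_one_dvd_sub_specializeXOne (f : AddMonoidAlgebra k (ℤ × ℤ)) :
    single ((1, 0) : ℤ × ℤ) (1 : k) - 1 ∣ f - specializeXOne f := by
  induction f using induction_linear with
  | zero => simp
  | add f g hf hg => simpa [map_add, add_sub_add_comm] using dvd_add hf hg
  | single a r =>
    have : single a r - single (0, a.2) r = single (0, a.2) r * (single (a.1, 0) 1 - 1) := by
      rw [mul_sub, single_mul_single]; simp
    rw [specializeXOne_single, this]
    exact Dvd.dvd.mul_left (single_fst_sub_one_dvd a.1) _

theorem single_sub_one_ne_zero [Nontrivial k] {a : ℤ × ℤ} (ha : a ≠ 0) :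
    single a (1 : k) - 1 ≠ 0 := by
  rw [sub_ne_zero, one_def, Ne, single_left_inj one_ne_zero]
  exact ha

end AddMonoidAlgebra

/-- The toric code chain complex is a complex (`∂₁∂₂ = 0`) and is exact in the middle:
`ker ∂₁ = im ∂₂` over `F₂[x^{±1}, y^{±1}]`. -/
theorem toric_code_exact :
    toricD1 ∘ₗ toricD2 = 0 ∧ LinearMap.ker toricD1 = LinearMap.range toricD2 := by
  open AddMonoidAlgebra in
  have hx : Lx - 1 ≠ 0 := single_sub_one_ne_zero (by simp)
  have hεx : specializeXOne (Lx - 1) = 0 := by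
    rw [map_sub, map_one, Lx, specializeXOne_single]
    exact sub_eq_zero_of_eq one_def.symm
  have hεy : specializeXOne (Ly - 1) ≠ 0 := by
    rw [map_sub, map_one, Ly, specializeXOne_single]
    exact single_sub_one_ne_zero (by simp)
  rw [toricD1, toricD2, show -Lx + 1 = -(Lx - 1) by ring]
  exact ⟨mulVecLin_row_comp_mulVecLin_col _ _, ker_mulVecLin_row_eq_range_mulVecLin_col
    fun u v h => exists_eq_mul_of_mul_add_mul_eq_zero specializeXOne hx hεx hεy
      single_fst_sub_one_dvd_sub_specializeXOne h⟩
end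

section
/- Over R = F₂[x^{±1}, y^{±1}, z^{±1}], the image of the cubic code excitation map ε = (1+x+y+z, 1+xy+yz+zx) : R² → R, i.e., the ideal generated by 1+x+y+z and 1+xy+yz+zx, contains no nonzero binomial: no element of the form m₁ + m₂ with m₁, m₂ distinct monomials, and no single monomial, lies in this ideal. -/
/-- The Laurent polynomial ring `F₂[x^{±1}, y^{±1}, z^{±1}]` as the group algebra of `ℤ³`. -/
abbrev Laurent3F2 : Type := AddMonoidAlgebra (ZMod 2) (ℤ × ℤ × ℤ)

noncomputable def cx : Laurent3F2 := AddMonoidAlgebra.single (1, 0, 0) 1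
noncomputable def cy : Laurent3F2 := AddMonoidAlgebra.single (0, 1, 0) 1
noncomputable def cz : Laurent3F2 := AddMonoidAlgebra.single (0, 0, 1) 1

/-- The ideal generated by the two cubic code polynomials
`1 + x + y + z` and `1 + xy + yz + zx`. -/
noncomputable def cubicIdeal : Ideal Laurent3F2 :=
  Ideal.span {1 + cx + cy + cz, 1 + cx * cy + cy * cz + cz * cx}

/-!
The points `x = 1 + ωt`, `y = 1 + t`, `z = 1 + ω²t` over `𝔽₄(t)`, with `ω² + ω + 1 = 0`, satisfy
`1 + x + y + z = 0` and `1 + xy + yz + zx = 0` (indeed `x + 1, y + 1, z + 1` are the three cube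
roots of `t³`). Evaluating at this point therefore kills the ideal, and it sends the monomial
`x^a y^b z^c` to a unit of `𝔽₄(t)` whose order of vanishing at the roots `ω², 1, ω` of `x, y, z`
is `a, b, c`. So monomials go to nonzero elements, and distinct monomials to distinct ones,
which in characteristic two means that no binomial goes to zero.
-/

open Polynomial IsDedekindDomain WithZero

section CharTwo

variable {k G K : Type*} [CommRing k] [AddMonoid G] [CommRing K] [Algebra k K]

theorem AddMonoidAlgebra.lift_units_single_ne_zero [Nontrivial K] (f : Multiplicative G →* Kˣ)
    (m : G) :
    AddMonoidAlgebra.lift k K G ((Units.coeHom K).comp f) (AddMonoidAlgebra.single m 1) ≠ 0 := by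
  simp

theorem AddMonoidAlgebra.lift_units_single_add_single_ne_zero [CharP k 2] (f : Multiplicative G →* Kˣ)
    (hf : Function.Injective f) {m₁ m₂ : G} (h : m₁ ≠ m₂) :
    AddMonoidAlgebra.lift k K G ((Units.coeHom K).comp f)
      (AddMonoidAlgebra.single m₁ 1 + AddMonoidAlgebra.single m₂ 1) ≠ 0 := by
  intro h0
  simp only [map_add, AddMonoidAlgebra.lift_single, one_smul, MonoidHom.comp_apply,
    Units.coeHom_apply] at h0
  have add_self (a : K) : a + a = 0 := by
    rw [← two_smul k, CharTwo.two_eq_zero, zero_smul]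
  exact h <| Multiplicative.ofAdd.injective <| hf <| Units.ext <|
    add_right_cancel (h0.trans (add_self _).symm)

end CharTwo

section Monomial

variable {M : Type*} [CommGroup M]

def monomialHom (u v w : M) : Multiplicative (ℤ × ℤ × ℤ) →* M :=
  AddMonoidHom.toMultiplicativeLeft <| (zmultiplesHom _ (Additive.ofMul u)).coprod <|
    (zmultiplesHom _ (Additive.ofMul v)).coprod (zmultiplesHom _ (Additive.ofMul w))

@[simp]
theorem monomialHom_ofAdd (u v w : M) (m : ℤ × ℤ × ℤ) :
    monomialHom u v w (Multiplicative.ofAdd m) = u ^ m.1 * v ^ m.2.1 * w ^ m.2.2 := by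
  simp [monomialHom, mul_assoc]

end Monomial

section RootPlace

variable {F : Type*} [Field F]

noncomputable def rootPlace (a : F) : HeightOneSpectrum F[X] where
  asIdeal := Ideal.span {X - C a}
  isPrime := (Ideal.span_singleton_prime (X_sub_C_ne_zero a)).2 (prime_X_sub_C a)
  ne_bot := by simpa using X_sub_C_ne_zero a

theorem intValuation_rootPlace_of_eval_ne_zero {a : F} {p : F[X]} (hp : p.eval a ≠ 0) :
    (rootPlace a).intValuation p = 1 := by
  rw [HeightOneSpectrum.intValuation_eq_one_iff]
  exact fun hmem => hp (dvd_iff_isRoot.1 (Ideal.mem_span_singleton.1 hmem))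

theorem intValuation_rootPlace_X_sub_C_self (a : F) :
    (rootPlace a).intValuation (X - C a) = exp (-1) :=
  HeightOneSpectrum.intValuation_singleton _ (X_sub_C_ne_zero a) rfl

noncomputable def linearUnit (c b : F) (hc : c ≠ 0) : (RatFunc F)ˣ :=
  Units.mk0 (algebraMap F[X] (RatFunc F) (C c * (X - C b)))
    ((map_ne_zero_iff _ (RatFunc.algebraMap_injective F)).2
      (mul_ne_zero (C_ne_zero.2 hc) (X_sub_C_ne_zero b)))

theorem valuation_linearUnit [DecidableEq F] (a b : F) {c : F} (hc : c ≠ 0) :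
    (rootPlace a).valuation (RatFunc F) (linearUnit c b hc) = if a = b then exp (-1) else 1 := by
  rw [linearUnit, Units.val_mk0, HeightOneSpectrum.valuation_of_algebraMap]
  split_ifs with hab
  · rw [map_mul, intValuation_rootPlace_of_eval_ne_zero (by simpa using hc), hab,
      intValuation_rootPlace_X_sub_C_self, one_mul]
  · exact intValuation_rootPlace_of_eval_ne_zero (by simp [hc, sub_ne_zero.2 hab])

end RootPlace

abbrev F4 : Type := AdjoinRoot (X ^ 2 + X + 1 : (ZMod 2)[X])

instance : Fact (Irreducible (X ^ 2 + X + 1 : (ZMod 2)[X])) :=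
  ⟨irreducible_of_degree_le_three_of_not_isRoot (by simp [natDegree_add_eq_left_of_natDegree_lt])
    (by simp only [IsRoot, eval_add, eval_pow, eval_X, eval_one]; decide)⟩

noncomputable def ω : F4 := AdjoinRoot.root _

theorem ω_sq_add_ω_add_one : ω ^ 2 + ω + 1 = 0 := by
  have h := AdjoinRoot.eval₂_root (X ^ 2 + X + 1 : (ZMod 2)[X])
  simp only [eval₂_add, eval₂_pow, eval₂_X, eval₂_one] at h
  exact h

theorem F4.two_eq_zero : (2 : F4) = 0 := by
  rw [← map_ofNat (algebraMap (ZMod 2) F4) 2, show (2 : ZMod 2) = 0 from rfl, map_zero]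

theorem ω_ne_zero : ω ≠ 0 := fun h => by
  simpa [h] using ω_sq_add_ω_add_one

theorem ω_sq_ne_one : ω ^ 2 ≠ 1 := fun h => one_ne_zero (α := F4) <| by
  linear_combination ω * ω_sq_add_ω_add_one - (ω + 1) * h - ω * F4.two_eq_zero

theorem ω_sq_ne_ω : ω ^ 2 ≠ ω := fun h => one_ne_zero (α := F4) <| by
  linear_combination ω_sq_add_ω_add_one - h - ω * F4.two_eq_zero

theorem one_ne_ω : 1 ≠ ω := fun h => one_ne_zero (α := F4) <| by
  linear_combination ω_sq_add_ω_add_one + (ω + 2) * h - F4.two_eq_zero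

/-- `x, y, z ↦ ω (t - ω²), t - 1, ω² (t - ω)`, i.e. `1 + ωt, 1 + t, 1 + ω²t` in characteristic
two. -/
noncomputable def cubicParam : Multiplicative (ℤ × ℤ × ℤ) →* (RatFunc F4)ˣ :=
  monomialHom (linearUnit ω (ω ^ 2) ω_ne_zero) (linearUnit 1 1 one_ne_zero)
    (linearUnit (ω ^ 2) ω (pow_ne_zero 2 ω_ne_zero))

theorem valuation_cubicParam (m : ℤ × ℤ × ℤ) :
    (rootPlace (ω ^ 2)).valuation (RatFunc F4) (cubicParam (Multiplicative.ofAdd m)) = exp (-m.1) ∧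
    (rootPlace (1 : F4)).valuation (RatFunc F4) (cubicParam (Multiplicative.ofAdd m)) =
      exp (-m.2.1) ∧
    (rootPlace ω).valuation (RatFunc F4) (cubicParam (Multiplicative.ofAdd m)) = exp (-m.2.2) := by
  classical
  simp only [cubicParam, monomialHom_ofAdd, Units.val_mul, Units.val_zpow_eq_zpow_val, map_mul,
    map_zpow₀, valuation_linearUnit]
  simp only [ω_sq_ne_one, ω_sq_ne_ω, one_ne_ω, one_ne_ω.symm, ω_sq_ne_one.symm, ω_sq_ne_ω.symm,
    if_true, if_false, one_zpow, mul_one, one_mul, ← exp_zsmul, smul_neg, zsmul_one, Int.cast_id,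
    and_self]

theorem cubicParam_injective : Function.Injective cubicParam := by
  intro m n h
  obtain ⟨hm₁, hm₂, hm₃⟩ := valuation_cubicParam m.toAdd
  obtain ⟨hn₁, hn₂, hn₃⟩ := valuation_cubicParam n.toAdd
  simp only [ofAdd_toAdd, h] at hm₁ hm₂ hm₃
  have exp_neg_inj {a b : ℤ} (hab : exp (-a) = exp (-b)) : a = b := by simpa using hab
  exact Multiplicative.toAdd.injective <| Prod.ext (exp_neg_inj (hm₁.symm.trans hn₁)) <|
    Prod.ext (exp_neg_inj (hm₂.symm.trans hn₂)) (exp_neg_inj (hm₃.symm.trans hn₃))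

noncomputable def cubicEval : Laurent3F2 →ₐ[ZMod 2] RatFunc F4 :=
  AddMonoidAlgebra.lift (ZMod 2) (RatFunc F4) (ℤ × ℤ × ℤ) ((Units.coeHom _).comp cubicParam)

theorem cubicEval_cx : cubicEval cx = algebraMap F4[X] (RatFunc F4) (C ω * (X - C (ω ^ 2))) := by
  simp [cubicEval, cx, cubicParam, linearUnit]

theorem cubicEval_cy : cubicEval cy = algebraMap F4[X] (RatFunc F4) (C 1 * (X - C 1)) := by
  simp [cubicEval, cy, cubicParam, linearUnit]

theorem cubicEval_cz : cubicEval cz = algebraMap F4[X] (RatFunc F4) (C (ω ^ 2) * (X - C ω)) := by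
  simp [cubicEval, cz, cubicParam, linearUnit]

theorem cubicIdeal_le_ker_cubicEval : cubicIdeal ≤ RingHom.ker cubicEval := by
  have hω : (C ω) ^ 2 + C ω + 1 = (0 : F4[X]) := by
    simpa using congrArg C ω_sq_add_ω_add_one
  have h2 : (2 : F4[X]) = 0 := by
    rw [← map_ofNat C 2, F4.two_eq_zero, C_0]
  have gen₁ : 1 + C ω * (X - C ω ^ 2) + (X - 1) + C ω ^ 2 * (X - C ω) = (0 : F4[X]) := by
    linear_combination X * hω - (C ω) ^ 3 * h2
  -- the remainder of the reduction modulo `ω² + ω + 1` is `4ω³ = 2ω³ * 2`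
  have gen₂ : 1 + C ω * (X - C ω ^ 2) * (X - 1) + (X - 1) * (C ω ^ 2 * (X - C ω)) +
      C ω ^ 2 * (X - C ω) * (C ω * (X - C ω ^ 2)) = (0 : F4[X]) := by
    linear_combination
      (X ^ 2 * C ω - X * (C ω + C ω ^ 3) + (C ω - 1) ^ 2 * (C ω ^ 2 + C ω + 1)) * hω +
        2 * C ω ^ 3 * h2
  rw [cubicIdeal, Ideal.span_le, Set.insert_subset_iff, Set.singleton_subset_iff]
  simp only [SetLike.mem_coe, RingHom.mem_ker, map_add, map_mul, map_one, cubicEval_cx,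
    cubicEval_cy, cubicEval_cz]
  constructor
  · simpa using congrArg (algebraMap F4[X] (RatFunc F4)) gen₁
  · simpa using congrArg (algebraMap F4[X] (RatFunc F4)) gen₂

/-- No monomial and no binomial (sum of two distinct monomials) lies in the
image of the cubic code excitation map: topological excitations of the cubic
code are immobile. -/
theorem cubic_code_no_binomial :
    (∀ m : ℤ × ℤ × ℤ, (AddMonoidAlgebra.single m 1 : Laurent3F2) ∉ cubicIdeal) ∧
    (∀ m₁ m₂ : ℤ × ℤ × ℤ, m₁ ≠ m₂ →
      (AddMonoidAlgebra.single m₁ 1 + AddMonoidAlgebra.single m₂ 1 : Laurent3F2) ∉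
        cubicIdeal) :=
  ⟨fun m hm => AddMonoidAlgebra.lift_units_single_ne_zero cubicParam m
      (cubicIdeal_le_ker_cubicEval hm),
    fun _ _ hne hm => AddMonoidAlgebra.lift_units_single_add_single_ne_zero cubicParam
      cubicParam_injective hne (cubicIdeal_le_ker_cubicEval hm)⟩
end
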